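/- For every n ≥ 0, the number of restricted ascent sequences of length n equals the n-th Catalan number C_n = (1/(n+1))·binom(2n, n). -/

import Mathlib

/-!
STATEMENT 16: For every n ≥ 0, the number of restricted ascent sequences of length n
equals the n-th Catalan number C_n = (1/(n+1))·binom(2n,n).
-/

/-- Number of ascents of a finite sequence of naturals. -/
def ascents (l : List ℕ) : ℕ := (l.zip l.tail).countP fun p => decide (p.1 < p.2)

/-- `l` is a restricted ascent sequence: `x₁ = 0` and, for `i ≥ 2`,
`max(m-1,0) ≤ xᵢ ≤ 1 + asc(x₁,…,x_{i-1})` where `m = max(x₁,…,x_{i-1})`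
(here `m - 1` is truncated subtraction, i.e. `max(m-1,0)`).
The empty sequence is a restricted ascent sequence. -/
def IsRestrictedAscentSeq (l : List ℕ) : Prop :=
  ∀ i (h : i < l.length),
    if i = 0 then l.get ⟨i, h⟩ = 0
    else (l.take i).foldr max 0 - 1 ≤ l.get ⟨i, h⟩ ∧ l.get ⟨i, h⟩ ≤ ascents (l.take i) + 1


/-!
Let `l ++ [t]` be a restricted ascent sequence with maximum `m` and `a` ascents. Then
`m - 1 ≤ t ≤ a`, the letters that may follow are `m - 1, …, a + 1`, and the number of ways to
extend it by `k` letters depends only on `δ = t - (m - 1) ∈ {0, 1}` and `j = a - t`. Appending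
the least admissible letter, the next one, or a larger letter `x` leads to the states
`(0, j + δ)`, `(1, j)` and `(1, a + 1 - x)`. If `C = 1 + X C²` is the Catalan series, then
the series `C ^ (2 + δ) * (1 + X C³) ^ j` satisfy the same recursion, so they count the
extensions. The sequence `[0]` is in state `(0, 0)`, so there are `[Xⁿ] C² = Cₙ₊₁` sequences
of length `n + 1`.
-/

open Finset PowerSeries

lemma foldr_max_append_singleton (l : List ℕ) (x : ℕ) :
    (l ++ [x]).foldr max 0 = max (l.foldr max 0) x := by
  induction l with
  | nil => simp
  | cons a l ih => simp only [List.cons_append, List.foldr_cons, ih, max_assoc]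

lemma ascents_cons_cons (a b : ℕ) (l : List ℕ) :
    ascents (a :: b :: l) = ascents (b :: l) + if a < b then 1 else 0 := by
  simp [ascents, List.countP_cons]

lemma ascents_append_singleton (l : List ℕ) (t x : ℕ) :
    ascents (l ++ [t] ++ [x]) = ascents (l ++ [t]) + if t < x then 1 else 0 := by
  induction l with
  | nil => simp [ascents]
  | cons a l ih =>
    cases l <;> simp only [List.nil_append, List.cons_append] at ih ⊢ <;>
      rw [ascents_cons_cons, ih, ascents_cons_cons] <;> omega

def nextLetters (l : List ℕ) : Finset ℕ :=
  if l = [] then {0} else Icc (l.foldr max 0 - 1) (ascents l + 1)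

lemma isRestrictedAscentSeq_iff_getElem_mem_nextLetters (l : List ℕ) :
    IsRestrictedAscentSeq l ↔ ∀ i (h : i < l.length), l[i] ∈ nextLetters (l.take i) := by
  refine forall_congr' fun i => forall_congr' fun h => ?_
  by_cases hi : i = 0
  · subst hi; simp [nextLetters]
  · have : l.take i ≠ [] := by rw [Ne, List.take_eq_nil_iff, ← List.length_eq_zero_iff]; omega
    simp [nextLetters, hi, this]

lemma isRestrictedAscentSeq_append_singleton {l : List ℕ} {x : ℕ} :
    IsRestrictedAscentSeq (l ++ [x]) ↔ IsRestrictedAscentSeq l ∧ x ∈ nextLetters l := by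
  simp only [isRestrictedAscentSeq_iff_getElem_mem_nextLetters, List.length_append,
    List.length_singleton]
  constructor
  · intro H
    refine ⟨fun i hi => ?_, by simpa using H l.length (by omega)⟩
    simpa [List.getElem_append_left hi, List.take_append_of_le_length hi.le] using H i (by omega)
  · rintro ⟨H, hx⟩ i hi
    rcases Nat.lt_succ_iff_lt_or_eq.1 hi with hi | rfl
    · simpa [List.getElem_append_left hi, List.take_append_of_le_length hi.le] using H i hi
    · simpa using hx

lemma IsRestrictedAscentSeq.of_append {l₁ l₂ : List ℕ}
    (h : IsRestrictedAscentSeq (l₁ ++ l₂)) : IsRestrictedAscentSeq l₁ := by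
  induction l₂ using List.reverseRecOn with
  | nil => simpa using h
  | append_singleton l₂ x ih =>
    rw [← List.append_assoc, isRestrictedAscentSeq_append_singleton] at h
    exact ih h.1

lemma IsRestrictedAscentSeq.last_mem_Icc {l : List ℕ} {t : ℕ}
    (h : IsRestrictedAscentSeq (l ++ [t])) :
    t ∈ Icc ((l ++ [t]).foldr max 0 - 1) (ascents (l ++ [t])) := by
  induction l using List.reverseRecOn generalizing t with
  | nil =>
    have ht : t = 0 := by
      simpa [nextLetters] using ((isRestrictedAscentSeq_append_singleton (l := [])).1 h).2
    simp [ht, ascents]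
  | append_singleton l s ih =>
    rw [isRestrictedAscentSeq_append_singleton, nextLetters, if_neg (by simp), mem_Icc] at h
    have hs := mem_Icc.1 (ih h.1)
    rw [foldr_max_append_singleton, ascents_append_singleton, mem_Icc]
    split_ifs <;> omega

def completions : ℕ → List ℕ → Finset (List ℕ)
  | 0, l => {l}
  | k + 1, l => (nextLetters l).biUnion fun x => completions k (l ++ [x])

lemma prefix_of_mem_completions {k : ℕ} {l r : List ℕ} (hr : r ∈ completions k l) :
    l <+: r ∧ r.length = l.length + k := by
  induction k generalizing l with
  | zero => simp_all [completions]
  | succ k ih =>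
    simp only [completions, mem_biUnion] at hr
    obtain ⟨x, -, hr⟩ := hr
    obtain ⟨hp, hlen⟩ := ih hr
    rw [List.length_append, List.length_singleton] at hlen
    exact ⟨(List.prefix_append _ _).trans hp, by omega⟩

lemma mem_completions {k : ℕ} {l r : List ℕ} (hl : IsRestrictedAscentSeq l) :
    r ∈ completions k l ↔ IsRestrictedAscentSeq r ∧ l <+: r ∧ r.length = l.length + k := by
  induction k generalizing l with
  | zero =>
    simp only [completions, mem_singleton, add_zero]
    refine ⟨by rintro rfl; exact ⟨hl, List.prefix_refl _, rfl⟩, fun ⟨_, hp, hlen⟩ => ?_⟩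
    exact (hp.eq_of_length hlen.symm).symm
  | succ k ih =>
    simp only [completions, mem_biUnion]
    constructor
    · rintro ⟨x, hx, hr⟩
      obtain ⟨hr, hp, hlen⟩ := (ih (isRestrictedAscentSeq_append_singleton.2 ⟨hl, hx⟩)).1 hr
      rw [List.length_append, List.length_singleton] at hlen
      exact ⟨hr, (List.prefix_append _ _).trans hp, by omega⟩
    · rintro ⟨hr, ⟨_ | ⟨y, s⟩, rfl⟩, hlen⟩
      · simp at hlen
      have hy : IsRestrictedAscentSeq (l ++ [y] ++ s) := by simpa using hr
      have hy := isRestrictedAscentSeq_append_singleton.1 hy.of_append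
      refine ⟨y, hy.2, (ih (isRestrictedAscentSeq_append_singleton.2 hy)).2 ⟨hr, ?_, ?_⟩⟩
      · simp
      · simp only [List.length_append, List.length_cons, List.length_nil] at hlen ⊢; omega

lemma card_completions_succ (k : ℕ) (l : List ℕ) :
    #(completions (k + 1) l) = ∑ x ∈ nextLetters l, #(completions k (l ++ [x])) := by
  refine card_biUnion fun x _ y _ hxy => disjoint_left.2 fun r hrx hry => hxy ?_
  obtain ⟨hpx, hlx⟩ := prefix_of_mem_completions hrx
  obtain ⟨hpy, -⟩ := prefix_of_mem_completions hry
  have := (List.prefix_of_prefix_length_le hpx hpy (by simp)).eq_of_length (by simp)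
  simpa using this

local notation "𝒞" => catalanSeries

noncomputable def completionSeries (δ j : ℕ) : PowerSeries ℕ :=
  𝒞 ^ (2 + δ) * (X * 𝒞 ^ 3 + 1) ^ j

lemma X_mul_catalanSeries_pow_three_add_one_add_X_mul_sq :
    X * 𝒞 ^ 3 + 1 + X * 𝒞 ^ 2 = 𝒞 ^ 2 := by
  have hC : 𝒞 ^ 2 * X + 1 = 𝒞 := catalanSeries_sq_mul_X_add_one
  calc X * 𝒞 ^ 3 + 1 + X * 𝒞 ^ 2 = 𝒞 ^ 3 * X + (𝒞 ^ 2 * X + 1) := by ring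
    _ = 𝒞 ^ 3 * X + 𝒞 := by rw [hC]
    _ = 𝒞 * (𝒞 ^ 2 * X + 1) := by ring
    _ = 𝒞 ^ 2 := by rw [hC]; ring

lemma completionSeries_eq {δ : ℕ} (hδ : δ ≤ 1) (j : ℕ) :
    completionSeries δ j = 1 + X * (completionSeries 0 (j + δ) + completionSeries 1 j +
      ∑ i ∈ range (j + δ), completionSeries 1 i) := by
  have hC : 𝒞 ^ 2 * X + 1 = 𝒞 := catalanSeries_sq_mul_X_add_one
  have hq : X * 𝒞 ^ 3 + 1 + X * 𝒞 ^ 2 = 𝒞 ^ 2 :=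
    X_mul_catalanSeries_pow_three_add_one_add_X_mul_sq
  have hsum : ∑ i ∈ range (j + δ), completionSeries 1 i =
      𝒞 ^ 3 * ∑ i ∈ range (j + δ), (X * 𝒞 ^ 3 + 1) ^ i := by
    simp [completionSeries, Finset.mul_sum]
  have hlhs : 𝒞 ^ (2 + δ) * (X * 𝒞 ^ 3 + 1) ^ j =
      X * 𝒞 ^ 2 * (X * 𝒞 ^ 3 + 1) ^ (j + δ) + X * 𝒞 ^ 3 * (X * 𝒞 ^ 3 + 1) ^ j +
      ((∑ i ∈ range (j + δ), (X * 𝒞 ^ 3 + 1) ^ i) * (X * 𝒞 ^ 3) + 1) := by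
    rw [geom_sum_mul_add]
    obtain rfl | rfl : δ = 0 ∨ δ = 1 := by omega
    · calc 𝒞 ^ (2 + 0) * (X * 𝒞 ^ 3 + 1) ^ j
          = (X * 𝒞 ^ 3 + 1 + X * 𝒞 ^ 2) * (X * 𝒞 ^ 3 + 1) ^ j := by rw [hq]
        _ = _ := by ring
    · calc 𝒞 ^ (2 + 1) * (X * 𝒞 ^ 3 + 1) ^ j
          = 𝒞 * (X * 𝒞 ^ 3 + 1 + X * 𝒞 ^ 2) * (X * 𝒞 ^ 3 + 1) ^ j := by rw [hq]; ring
        _ = ((X * 𝒞 ^ 3 + 1) * (𝒞 ^ 2 * X + 1) + X * 𝒞 ^ 3) * (X * 𝒞 ^ 3 + 1) ^ j := by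
          rw [hC]; ring
        _ = _ := by ring
  rw [hsum, completionSeries, hlhs, completionSeries, completionSeries]
  ring

lemma sum_Icc_completionSeries {m a t : ℕ} (hmt : m - 1 ≤ t) (htm : t ≤ m) (hta : t ≤ a) :
    ∑ x ∈ Icc (m - 1) (a + 1),
        completionSeries (x - (max m x - 1)) (a + (if t < x then 1 else 0) - x) =
      completionSeries 0 (a - t + (t - (m - 1))) + completionSeries 1 (a - t) +
        ∑ i ∈ range (a - t + (t - (m - 1))), completionSeries 1 i := by
  set n := a - t + (t - (m - 1))
  rw [← Ico_add_one_right_eq_Icc, sum_Ico_eq_sum_range, show a + 1 + 1 - (m - 1) = n + 2 by omega,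
    sum_range_succ', sum_range_succ']
  calc _ = ∑ i ∈ range n, completionSeries 1 (n - 1 - i) + completionSeries 1 (a - t) +
        completionSeries 0 n := by
        congr 1
        · congr 1
          · refine sum_congr rfl fun i hi => ?_
            rw [mem_range] at hi
            split_ifs <;> congr 1 <;> omega
          · split_ifs <;> congr 1 <;> omega
        · split_ifs <;> congr 1 <;> omega
    _ = _ := by rw [sum_range_reflect (completionSeries 1)]; ring

lemma card_completions {l : List ℕ} {t : ℕ} (h : IsRestrictedAscentSeq (l ++ [t])) (k : ℕ) :
    #(completions k (l ++ [t])) = coeff k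
      (completionSeries (t - ((l ++ [t]).foldr max 0 - 1)) (ascents (l ++ [t]) - t)) := by
  induction k generalizing l t with
  | zero => simp [completions, completionSeries]
  | succ k ih =>
    obtain ⟨hmt, hta⟩ := mem_Icc.1 h.last_mem_Icc
    have htm : t ≤ (l ++ [t]).foldr max 0 := by
      rw [foldr_max_append_singleton]; exact le_max_right _ _
    have hnext : nextLetters (l ++ [t]) =
        Icc ((l ++ [t]).foldr max 0 - 1) (ascents (l ++ [t]) + 1) := if_neg (by simp)
    rw [card_completions_succ, hnext]
    rw [sum_congr rfl fun x hx =>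
      ih (isRestrictedAscentSeq_append_singleton.2 ⟨h, hnext ▸ hx⟩)]
    simp only [foldr_max_append_singleton (l ++ [t]), ascents_append_singleton]
    rw [← map_sum, sum_Icc_completionSeries hmt htm hta]
    conv_rhs => rw [completionSeries_eq (by omega)]
    simp

lemma coeff_catalanSeries_sq (n : ℕ) : coeff n (𝒞 ^ 2) = catalan (n + 1) := by
  simpa [coeff_succ_mul_X] using congrArg (coeff (n + 1)) catalanSeries_sq_mul_X_add_one

lemma isRestrictedAscentSeq_nil : IsRestrictedAscentSeq [] := by
  simp [IsRestrictedAscentSeq]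

lemma card_completions_nil (n : ℕ) : #(completions n []) = catalan n := by
  cases n with
  | zero => simp [completions]
  | succ n =>
    have h0 : IsRestrictedAscentSeq ([] ++ [0]) :=
      isRestrictedAscentSeq_append_singleton.2
        ⟨isRestrictedAscentSeq_nil, by simp [nextLetters]⟩
    rw [card_completions_succ, nextLetters, if_pos rfl, sum_singleton, card_completions h0]
    simpa [completionSeries, ascents] using coeff_catalanSeries_sq n

theorem restricted_ascent_seq_card_eq_catalan (n : ℕ) :
    Nat.card {l : List ℕ // IsRestrictedAscentSeq l ∧ l.length = n} =
      Nat.choose (2 * n) n / (n + 1) := by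
  have hmem (l : List ℕ) :
      IsRestrictedAscentSeq l ∧ l.length = n ↔ l ∈ completions n [] := by
    simp [mem_completions isRestrictedAscentSeq_nil]
  rw [Nat.card_congr (Equiv.subtypeEquivRight hmem), Nat.card_eq_finsetCard,
    card_completions_nil, catalan_eq_centralBinom_div, Nat.centralBinom]
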